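/- Let N ≥ 1 and τ > 0. Let R : ℝ → (N×N real matrices) be continuous with R(t)_{mn} ≥ 0 for all m ≠ n and all t ∈ [0,τ]; let p^eq : ℝ → ℝ^N be continuous with p^eq(t)_n > 0 and detailed balance R(t)_{nm}·p^eq(t)_m = R(t)_{mn}·p^eq(t)_n for all n, m, t ∈ [0,τ]; let p : ℝ → ℝ^N be differentiable on [0,τ] with p(t)_n > 0; and let v : ℝ → ℝ^N be continuous with p'(t) = K_{p(t)} v(t) for all t ∈ [0,τ], where (K_{p(t)} u)_n := Σ_{m≠n} R(t)_{nm} · p^eq(t)_m · Φ(p(t)_n/p^eq(t)_n, p(t)_m/p^eq(t)_m) · (u_n − u_m). Define par(n) := +1 if p(0)_n ≥ p(τ)_n and par(n) := −1 otherwise. Then ( Σ_n |p(τ)_n − p(0)_n| )² ≤ 2 · ( ∫₀^τ Σ_{(n,m) : n≠m, par(n)≠par(m)} R(t)_{mn} · p(t)_n dt ) · ( ∫₀^τ ⟨v(t), K_{p(t)} v(t)⟩ dt ). -/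

import Mathlib

/-- The logarithmic mean of two positive real numbers. -/
noncomputable def logMean (x y : ℝ) : ℝ :=
  if x = y then x else (x - y) / (Real.log x - Real.log y)

/-- The Onsager-type matrix `K_p` acting on a vector `v`:
`(K_p v)_n = Σ_{m≠n} R_{nm} p^eq_m Φ(p_n/p^eq_n, p_m/p^eq_m) (v_n − v_m)`. -/
noncomputable def Kop {N : ℕ} (R : Matrix (Fin N) (Fin N) ℝ) (peq p v : Fin N → ℝ) :
    Fin N → ℝ :=
  fun n => ∑ m ∈ Finset.univ.filter (· ≠ n),
    R n m * peq m * logMean (p n / peq n) (p m / peq m) * (v n - v m)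

/-!
With the Onsager weights `W n m = R n m * peq m * Φ (p n / peq n) (p m / peq m)`, symmetric by
detailed balance, `K_p` is the weighted graph Laplacian of `W`, so `(a, b) ↦ ⟨a, K_p b⟩` is a
symmetric positive semidefinite form and obeys Cauchy–Schwarz. Since `ṗ = K_p v`, the total
variation is `-∫ ⟨par, K_p v⟩`, and pointwise `⟨par, K_p v⟩² ≤ ⟨par, K_p par⟩ ⟨v, K_p v⟩`.
As `(par n - par m)²` is `4` on pairs of opposite parity and `0` otherwise, and `Φ` is at most the
arithmetic mean, `⟨par, K_p par⟩` is at most twice the partial activity. A Cauchy–Schwarz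
inequality in time concludes.
-/

open Finset Real

section LogMean

variable {x y : ℝ}

lemma logMean_self (x : ℝ) : logMean x x = x := if_pos rfl

lemma logMean_comm (x y : ℝ) : logMean x y = logMean y x := by
  rcases eq_or_ne x y with rfl | h
  · rfl
  · rw [logMean, logMean, if_neg h, if_neg h.symm, ← neg_div_neg_eq, neg_sub, neg_sub]

lemma logMean_of_lt (hx : 0 < x) (hxy : x < y) : logMean x y = (y - x) / log (y / x) := by
  rw [logMean, if_neg hxy.ne, ← neg_div_neg_eq, neg_sub, neg_sub,
    log_div (hx.trans hxy).ne' hx.ne']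

lemma le_logMean_of_lt (hx : 0 < x) (hxy : x < y) : x ≤ logMean x y := by
  have hlog : 0 < log (y / x) := log_pos ((one_lt_div hx).2 hxy)
  rw [logMean_of_lt hx hxy, le_div_iff₀ hlog]
  calc x * log (y / x) ≤ x * (y / x - 1) := by
        gcongr; exact log_le_sub_one_of_pos (div_pos (hx.trans hxy) hx)
    _ = y - x := by field_simp

lemma logMean_le_add_div_two_of_lt (hx : 0 < x) (hxy : x < y) :
    logMean x y ≤ (x + y) / 2 := by
  have hlog : 0 < log (y / x) := log_pos ((one_lt_div hx).2 hxy)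
  -- `2t/(t+2) ≤ log (1+t)` at `t = y/x - 1` reads `2(y-x)/(x+y) ≤ log (y/x)`
  have key := le_log_one_add_of_nonneg (x := y / x - 1)
    (by rw [sub_nonneg, one_le_div hx]; exact hxy.le)
  rw [add_sub_cancel, show 2 * (y / x - 1) / (y / x - 1 + 2) = 2 * (y - x) / (x + y) by
    field_simp; ring, div_le_iff₀ (by linarith)] at key
  rw [logMean_of_lt hx hxy, div_le_iff₀ hlog]
  linarith

lemma min_le_logMean (hx : 0 < x) (hy : 0 < y) : min x y ≤ logMean x y := by
  rcases lt_trichotomy x y with h | rfl | h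
  · exact (min_le_left x y).trans (le_logMean_of_lt hx h)
  · rw [logMean_self, min_self]
  · rw [logMean_comm]; exact (min_le_right x y).trans (le_logMean_of_lt hy h)

lemma logMean_le_add_div_two (hx : 0 < x) (hy : 0 < y) : logMean x y ≤ (x + y) / 2 := by
  rcases lt_trichotomy x y with h | rfl | h
  · exact logMean_le_add_div_two_of_lt hx h
  · rw [logMean_self]; linarith
  · rw [logMean_comm, add_comm]; exact logMean_le_add_div_two_of_lt hy h

lemma logMean_pos (hx : 0 < x) (hy : 0 < y) : 0 < logMean x y :=
  (lt_min hx hy).trans_le (min_le_logMean hx hy)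

lemma logMean_le_max (hx : 0 < x) (hy : 0 < y) : logMean x y ≤ max x y :=
  (logMean_le_add_div_two hx hy).trans (by linarith [le_max_left x y, le_max_right x y])

lemma continuousAt_logMean (hx : 0 < x) (hy : 0 < y) :
    ContinuousAt (fun q : ℝ × ℝ => logMean q.1 q.2) (x, y) := by
  rcases eq_or_ne x y with rfl | hne
  · have hpos : ∀ᶠ q : ℝ × ℝ in nhds (x, x), 0 < q.1 ∧ 0 < q.2 :=
      ((continuous_fst.tendsto _).eventually (lt_mem_nhds hx)).and
        ((continuous_snd.tendsto _).eventually (lt_mem_nhds hx))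
    have hmin := (continuous_fst.min continuous_snd).tendsto (x, x)
    have hmax := (continuous_fst.max continuous_snd).tendsto (x, x)
    simp only [min_self, max_self] at hmin hmax
    rw [ContinuousAt, logMean_self]
    exact tendsto_of_tendsto_of_tendsto_of_le_of_le' hmin hmax
      (hpos.mono fun q hq => min_le_logMean hq.1 hq.2)
      (hpos.mono fun q hq => logMean_le_max hq.1 hq.2)
  · have hlog : log x - log y ≠ 0 :=
      sub_ne_zero.2 fun h => hne (log_injOn_pos hx hy h)
    have hformula : ContinuousAt (fun q : ℝ × ℝ => (q.1 - q.2) / (log q.1 - log q.2)) (x, y) :=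
      (continuous_fst.sub continuous_snd).continuousAt.div
        ((continuous_fst.continuousAt.log hx.ne').sub (continuous_snd.continuousAt.log hy.ne'))
        hlog
    refine hformula.congr ?_
    filter_upwards [(isClosed_eq continuous_fst continuous_snd).isOpen_compl.mem_nhds hne]
      with q hq
    exact (if_neg hq).symm

lemma ContinuousOn.logMean {α : Type*} [TopologicalSpace α] {f g : α → ℝ} {s : Set α}
    (hf : ContinuousOn f s) (hg : ContinuousOn g s) (hf0 : ∀ a ∈ s, 0 < f a)
    (hg0 : ∀ a ∈ s, 0 < g a) : ContinuousOn (fun a => logMean (f a) (g a)) s := fun a ha =>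
  (continuousAt_logMean (hf0 a ha) (hg0 a ha)).comp_continuousWithinAt
    (f := fun a => (f a, g a)) ((hf a ha).prodMk (hg a ha))

end LogMean

section GraphLaplacian

variable {ι : Type*} [Fintype ι]

noncomputable def graphLaplacian (W : ι → ι → ℝ) (u : ι → ℝ) (n : ι) : ℝ :=
  ∑ m, W n m * (u n - u m)

variable {W : ι → ι → ℝ}

lemma two_mul_sum_mul_graphLaplacian (hW : ∀ n m, W n m = W m n) (a b : ι → ℝ) :
    2 * ∑ n, a n * graphLaplacian W b n = ∑ n, ∑ m, W n m * (a n - a m) * (b n - b m) := by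
  have hswap : ∑ n, ∑ m, W n m * a m * (b n - b m) = -∑ n, ∑ m, W n m * a n * (b n - b m) := by
    rw [sum_comm, ← sum_neg_distrib]
    refine sum_congr rfl fun n _ => ?_
    rw [← sum_neg_distrib]
    refine sum_congr rfl fun m _ => ?_
    rw [hW m n]; ring
  calc 2 * ∑ n, a n * graphLaplacian W b n
      = ∑ n, ∑ m, W n m * a n * (b n - b m) - ∑ n, ∑ m, W n m * a m * (b n - b m) := by
        rw [hswap, sub_neg_eq_add, ← two_mul]
        congr 1
        simp only [graphLaplacian, mul_sum]
        exact sum_congr rfl fun n _ => sum_congr rfl fun m _ => by ring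
    _ = _ := by
        simp only [← sum_sub_distrib]
        exact sum_congr rfl fun n _ => sum_congr rfl fun m _ => by ring

lemma sq_sum_mul_graphLaplacian_le (hW : ∀ n m, W n m = W m n)
    (hW0 : ∀ n m, n ≠ m → 0 ≤ W n m) (a b : ι → ℝ) :
    (∑ n, a n * graphLaplacian W b n) ^ 2
      ≤ (∑ n, a n * graphLaplacian W a n) * ∑ n, b n * graphLaplacian W b n := by
  have hterm (u : ι → ℝ) (q : ι × ι) : 0 ≤ W q.1 q.2 * (u q.1 - u q.2) * (u q.1 - u q.2) := by
    rcases eq_or_ne q.1 q.2 with h | h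
    · simp [h]
    · rw [mul_assoc]; exact mul_nonneg (hW0 _ _ h) (mul_self_nonneg _)
  have hcs := sum_sq_le_sum_mul_sum_of_sq_le_mul univ (fun q _ => hterm a q)
    (fun q _ => hterm b q) (r := fun q => W q.1 q.2 * (a q.1 - a q.2) * (b q.1 - b q.2))
    (fun q _ => le_of_eq (by ring))
  simp only [Fintype.sum_prod_type, ← two_mul_sum_mul_graphLaplacian hW] at hcs
  nlinarith

lemma sum_mul_graphLaplacian_self_nonneg (hW : ∀ n m, W n m = W m n)
    (hW0 : ∀ n m, n ≠ m → 0 ≤ W n m) (a : ι → ℝ) : 0 ≤ ∑ n, a n * graphLaplacian W a n := by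
  have h := two_mul_sum_mul_graphLaplacian hW a a
  have : 0 ≤ ∑ n, ∑ m, W n m * (a n - a m) * (a n - a m) := by
    refine sum_nonneg fun n _ => sum_nonneg fun m _ => ?_
    rcases eq_or_ne n m with rfl | h
    · simp
    · rw [mul_assoc]; exact mul_nonneg (hW0 _ _ h) (mul_self_nonneg _)
  linarith

lemma sum_sign_mul_graphLaplacian_sign (hW : ∀ n m, W n m = W m n) {σ : ι → ℤ}
    (hσ : ∀ n, σ n = 1 ∨ σ n = -1) :
    ∑ n, (σ n : ℝ) * graphLaplacian W (fun n => (σ n : ℝ)) n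
      = 2 * ∑ q ∈ univ.filter (fun q : ι × ι => σ q.1 ≠ σ q.2), W q.1 q.2 := by
  have hsq (n m : ι) : ((σ n : ℝ) - σ m) * ((σ n : ℝ) - σ m) = if σ n ≠ σ m then 4 else 0 := by
    rcases hσ n with hn | hn <;> rcases hσ m with hm | hm <;> norm_num [hn, hm]
  have h := two_mul_sum_mul_graphLaplacian hW (fun n => (σ n : ℝ)) (fun n => (σ n : ℝ))
  simp only [mul_assoc, hsq, mul_ite, mul_zero, ← Fintype.sum_prod_type'] at h
  rw [← sum_filter, ← sum_mul] at h
  linarith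

end GraphLaplacian

section OnsagerWeight

variable {ι : Type*} {R : Matrix ι ι ℝ} {peq p : ι → ℝ}

noncomputable def onsagerWeight (R : Matrix ι ι ℝ) (peq p : ι → ℝ) (n m : ι) : ℝ :=
  R n m * peq m * logMean (p n / peq n) (p m / peq m)

lemma onsagerWeight_comm {n m : ι} (hdb : R n m * peq m = R m n * peq n) :
    onsagerWeight R peq p n m = onsagerWeight R peq p m n := by
  rw [onsagerWeight, onsagerWeight, hdb, logMean_comm]

lemma onsagerWeight_nonneg (hpeq : ∀ n, 0 < peq n) (hp : ∀ n, 0 < p n) {n m : ι}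
    (hR : 0 ≤ R n m) : 0 ≤ onsagerWeight R peq p n m :=
  mul_nonneg (mul_nonneg hR (hpeq m).le)
    (logMean_pos (div_pos (hp n) (hpeq n)) (div_pos (hp m) (hpeq m))).le

lemma onsagerWeight_le (hpeq : ∀ n, 0 < peq n) (hp : ∀ n, 0 < p n) {n m : ι}
    (hR : 0 ≤ R n m) (hdb : R n m * peq m = R m n * peq n) :
    onsagerWeight R peq p n m ≤ (R m n * p n + R n m * p m) / 2 := by
  have hmean := logMean_le_add_div_two (div_pos (hp n) (hpeq n)) (div_pos (hp m) (hpeq m))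
  calc onsagerWeight R peq p n m
      ≤ R n m * peq m * ((p n / peq n + p m / peq m) / 2) :=
        mul_le_mul_of_nonneg_left hmean (mul_nonneg hR (hpeq m).le)
    _ = (R n m * peq m / peq n * p n + R n m * p m) / 2 := by
        field_simp [(hpeq n).ne', (hpeq m).ne']
    _ = (R m n * p n + R n m * p m) / 2 := by
        rw [hdb, mul_div_cancel_right₀ _ (hpeq n).ne']

lemma sum_onsagerWeight_le (hpeq : ∀ n, 0 < peq n) (hp : ∀ n, 0 < p n)
    {s : Finset (ι × ι)} (hswap : ∀ q ∈ s, q.swap ∈ s) (hR : ∀ q ∈ s, 0 ≤ R q.1 q.2)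
    (hdb : ∀ n m, R n m * peq m = R m n * peq n) :
    ∑ q ∈ s, onsagerWeight R peq p q.1 q.2 ≤ ∑ q ∈ s, R q.2 q.1 * p q.1 := by
  have hsym : ∑ q ∈ s, R q.1 q.2 * p q.2 = ∑ q ∈ s, R q.2 q.1 * p q.1 :=
    sum_nbij' Prod.swap Prod.swap hswap hswap (fun _ _ => rfl) (fun _ _ => rfl)
      (fun _ _ => rfl)
  calc ∑ q ∈ s, onsagerWeight R peq p q.1 q.2
      ≤ ∑ q ∈ s, (R q.2 q.1 * p q.1 + R q.1 q.2 * p q.2) / 2 :=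
        sum_le_sum fun q hq => onsagerWeight_le hpeq hp (hR q hq) (hdb _ _)
    _ = _ := by rw [← sum_div, sum_add_distrib, hsym]; ring

end OnsagerWeight

section Kop

variable {N : ℕ}

lemma Kop_eq_graphLaplacian (R : Matrix (Fin N) (Fin N) ℝ) (peq p : Fin N → ℝ) :
    Kop R peq p = graphLaplacian (onsagerWeight R peq p) := by
  ext u n
  refine sum_filter_of_ne fun m _ hm hmn => hm ?_
  rw [hmn, sub_self, mul_zero]

lemma sum_mul_Kop_self_nonneg {R : Matrix (Fin N) (Fin N) ℝ} {peq p : Fin N → ℝ}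
    (hR : ∀ m n, m ≠ n → 0 ≤ R m n) (hpeq : ∀ n, 0 < peq n)
    (hdb : ∀ n m, R n m * peq m = R m n * peq n) (hp : ∀ n, 0 < p n) (v : Fin N → ℝ) :
    0 ≤ ∑ n, v n * Kop R peq p v n := by
  rw [Kop_eq_graphLaplacian]
  exact sum_mul_graphLaplacian_self_nonneg (fun n m => onsagerWeight_comm (hdb n m))
    (fun n m h => onsagerWeight_nonneg hpeq hp (hR n m h)) v

theorem sq_sum_sign_mul_Kop_le {R : Matrix (Fin N) (Fin N) ℝ} {peq p : Fin N → ℝ}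
    (hR : ∀ m n, m ≠ n → 0 ≤ R m n) (hpeq : ∀ n, 0 < peq n)
    (hdb : ∀ n m, R n m * peq m = R m n * peq n) (hp : ∀ n, 0 < p n)
    {σ : Fin N → ℤ} (hσ : ∀ n, σ n = 1 ∨ σ n = -1) (v : Fin N → ℝ) :
    (∑ n, (σ n : ℝ) * Kop R peq p v n) ^ 2
      ≤ 2 * (∑ q ∈ univ.filter (fun q : Fin N × Fin N => q.1 ≠ q.2 ∧ σ q.1 ≠ σ q.2),
          R q.2 q.1 * p q.1) * ∑ n, v n * Kop R peq p v n := by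
  have hsymm (n m : Fin N) := onsagerWeight_comm (p := p) (hdb n m)
  have hnonneg (n m : Fin N) (h : n ≠ m) := onsagerWeight_nonneg hpeq hp (hR n m h)
  have hfilter : univ.filter (fun q : Fin N × Fin N => q.1 ≠ q.2 ∧ σ q.1 ≠ σ q.2)
      = univ.filter (fun q : Fin N × Fin N => σ q.1 ≠ σ q.2) :=
    filter_congr fun q _ => and_iff_right_of_imp fun h hq => h (congrArg σ hq)
  have hsign : ∑ n, (σ n : ℝ) * Kop R peq p (fun n => (σ n : ℝ)) n
      ≤ 2 * ∑ q ∈ univ.filter (fun q : Fin N × Fin N => σ q.1 ≠ σ q.2), R q.2 q.1 * p q.1 := by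
    rw [Kop_eq_graphLaplacian, sum_sign_mul_graphLaplacian_sign hsymm hσ]
    refine mul_le_mul_of_nonneg_left (sum_onsagerWeight_le hpeq hp (fun q hq => ?_)
      (fun q hq => ?_) hdb) zero_le_two
    · simpa [ne_comm] using hq
    · simp only [mem_filter] at hq
      exact hR _ _ fun h => hq.2 (congrArg σ h)
  rw [hfilter]
  calc (∑ n, (σ n : ℝ) * Kop R peq p v n) ^ 2
      ≤ (∑ n, (σ n : ℝ) * Kop R peq p (fun n => (σ n : ℝ)) n) * ∑ n, v n * Kop R peq p v n := by
        rw [Kop_eq_graphLaplacian]; exact sq_sum_mul_graphLaplacian_le hsymm hnonneg _ _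
    _ ≤ _ := mul_le_mul_of_nonneg_right hsign (sum_mul_Kop_self_nonneg hR hpeq hdb hp v)

lemma ContinuousOn.Kop {α : Type*} [TopologicalSpace α] {R : α → Matrix (Fin N) (Fin N) ℝ}
    {peq p u : α → Fin N → ℝ} {s : Set α} (hR : ∀ n m, ContinuousOn (fun x => R x n m) s)
    (hpeq : ∀ n, ContinuousOn (fun x => peq x n) s) (hp : ∀ n, ContinuousOn (fun x => p x n) s)
    (hu : ∀ n, ContinuousOn (fun x => u x n) s) (hpeq0 : ∀ x ∈ s, ∀ n, 0 < peq x n)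
    (hp0 : ∀ x ∈ s, ∀ n, 0 < p x n) (n : Fin N) :
    ContinuousOn (fun x => Kop (R x) (peq x) (p x) (u x) n) s := by
  have hratio (k : Fin N) : ContinuousOn (fun x => p x k / peq x k) s :=
    (hp k).div (hpeq k) fun x hx => (hpeq0 x hx k).ne'
  have hratio0 (k : Fin N) (x : α) (hx : x ∈ s) : 0 < p x k / peq x k :=
    div_pos (hp0 x hx k) (hpeq0 x hx k)
  exact continuousOn_finsetSum _ fun m _ => (((hR n m).mul (hpeq m)).mul
    ((hratio n).logMean (hratio m) (hratio0 n) (hratio0 m))).mul ((hu n).sub (hu m))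

end Kop

open MeasureTheory

lemma quadratic_nonneg_of_sq_le_mul {f g h : ℝ} (hg : 0 ≤ g) (hh : 0 ≤ h) (hfgh : f ^ 2 ≤ g * h)
    (s : ℝ) : 0 ≤ g * (s * s) + (-2 * f) * s + h := by
  rcases hg.eq_or_lt with rfl | hg
  · have hf : f = 0 :=
      pow_eq_zero_iff two_ne_zero |>.1 (le_antisymm (by simpa using hfgh) (sq_nonneg f))
    simpa [hf] using hh
  · -- `g · (g s² - 2 f s + h) = (g s - f)² + (g h - f²)`
    refine nonneg_of_mul_nonneg_right ?_ hg
    nlinarith [sq_nonneg (g * s - f)]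

theorem sq_integral_le_mul_of_sq_le_mul {α : Type*} [MeasurableSpace α] {μ : Measure α}
    {f g h : α → ℝ} (hf : Integrable f μ) (hg : Integrable g μ) (hh : Integrable h μ)
    (hg0 : 0 ≤ᵐ[μ] g) (hh0 : 0 ≤ᵐ[μ] h) (hfgh : ∀ᵐ x ∂μ, f x ^ 2 ≤ g x * h x) :
    (∫ x, f x ∂μ) ^ 2 ≤ (∫ x, g x ∂μ) * ∫ x, h x ∂μ := by
  have hquad (s : ℝ) : 0 ≤ (∫ x, g x ∂μ) * (s * s) + (-2 * ∫ x, f x ∂μ) * s + ∫ x, h x ∂μ := by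
    have := integral_nonneg_of_ae (μ := μ) (f := fun x => g x * (s * s) + (-2 * f x) * s + h x)
      (by filter_upwards [hg0, hh0, hfgh] with x hgx hhx hx
          exact quadratic_nonneg_of_sq_le_mul hgx hhx hx s)
    have hgf : Integrable (fun x => g x * (s * s) + (-2 * f x) * s) μ :=
      (hg.mul_const _).add ((hf.const_mul _).mul_const _)
    rwa [integral_add hgf hh, integral_add (hg.mul_const _) ((hf.const_mul _).mul_const _),
      integral_mul_const, integral_mul_const, integral_const_mul] at this
  have := discrim_le_zero hquad
  rw [discrim] at this
  nlinarith

theorem intervalIntegral.sq_integral_le_mul_of_sq_le_mul {a b : ℝ} (hab : a ≤ b) {f g h : ℝ → ℝ}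
    (hf : IntervalIntegrable f volume a b) (hg : IntervalIntegrable g volume a b)
    (hh : IntervalIntegrable h volume a b) (hg0 : ∀ t ∈ Set.Icc a b, 0 ≤ g t)
    (hh0 : ∀ t ∈ Set.Icc a b, 0 ≤ h t) (hfgh : ∀ t ∈ Set.Icc a b, f t ^ 2 ≤ g t * h t) :
    (∫ t in a..b, f t) ^ 2 ≤ (∫ t in a..b, g t) * ∫ t in a..b, h t := by
  have hIoc {P : ℝ → Prop} (hP : ∀ t ∈ Set.Icc a b, P t) :
      ∀ᵐ t ∂volume.restrict (Set.Ioc a b), P t :=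
    ae_restrict_of_forall_mem measurableSet_Ioc fun t ht => hP t (Set.Ioc_subset_Icc_self ht)
  simp only [intervalIntegral.integral_of_le hab]
  exact _root_.sq_integral_le_mul_of_sq_le_mul hf.1 hg.1 hh.1 (hIoc hg0) (hIoc hh0) (hIoc hfgh)

theorem total_variation_sq_le_two_mul_partial_activity_mul_entropy_general (N : ℕ)
    (τ : ℝ) (hτ : 0 < τ)
    (R : ℝ → Matrix (Fin N) (Fin N) ℝ) (hRcont : ∀ m n : Fin N, Continuous fun t => R t m n)
    (hR : ∀ t ∈ Set.Icc (0:ℝ) τ, ∀ m n : Fin N, m ≠ n → 0 ≤ R t m n)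
    (peq : ℝ → Fin N → ℝ) (hpeqcont : ∀ n : Fin N, Continuous fun t => peq t n)
    (hpeq : ∀ t ∈ Set.Icc (0:ℝ) τ, ∀ n, 0 < peq t n)
    (hdb : ∀ t ∈ Set.Icc (0:ℝ) τ, ∀ n m : Fin N, R t n m * peq t m = R t m n * peq t n)
    (p : ℝ → Fin N → ℝ) (hp : ∀ t ∈ Set.Icc (0:ℝ) τ, ∀ n, 0 < p t n)
    (v : ℝ → Fin N → ℝ) (hvcont : ∀ n : Fin N, Continuous fun t => v t n)
    (hderiv : ∀ t ∈ Set.Icc (0:ℝ) τ, ∀ n : Fin N,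
      HasDerivAt (fun s => p s n) (Kop (R t) (peq t) (p t) (v t) n) t)
    (par : Fin N → ℤ)
    (hpar : ∀ n, par n = if p τ n ≤ p 0 n then 1 else -1) :
    (∑ n, |p τ n - p 0 n|)^2
      ≤ 2 * (∫ t in (0:ℝ)..τ, ∑ nm ∈ Finset.univ.filter
              (fun nm : Fin N × Fin N => nm.1 ≠ nm.2 ∧ par nm.1 ≠ par nm.2),
              R t nm.2 nm.1 * p t nm.1)
          * (∫ t in (0:ℝ)..τ, ∑ n, v t n * Kop (R t) (peq t) (p t) (v t) n) := by
  have hIcc : Set.uIcc 0 τ = Set.Icc 0 τ := Set.uIcc_of_le hτ.le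
  have hint {f : ℝ → ℝ} (hf : ContinuousOn f (Set.Icc 0 τ)) : IntervalIntegrable f volume 0 τ :=
    ContinuousOn.intervalIntegrable (hIcc ▸ hf)
  have hpcont (n : Fin N) : ContinuousOn (fun t => p t n) (Set.Icc 0 τ) :=
    fun t ht => (hderiv t ht n).continuousAt.continuousWithinAt
  have hKcont := ContinuousOn.Kop (fun n m => (hRcont n m).continuousOn)
    (fun n => (hpeqcont n).continuousOn) hpcont (fun n => (hvcont n).continuousOn) hpeq hp
  have hsign (n : Fin N) : |p τ n - p 0 n| = -(par n * (p τ n - p 0 n)) := by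
    rw [hpar n]
    split_ifs with h
    · rw [abs_of_nonpos (sub_nonpos.2 h)]; simp
    · rw [abs_of_pos (sub_pos.2 (not_le.1 h))]; simp
  have hTV : ∑ n, |p τ n - p 0 n|
      = -∫ t in (0:ℝ)..τ, ∑ n, (par n : ℝ) * Kop (R t) (peq t) (p t) (v t) n := by
    rw [intervalIntegral.integral_finsetSum fun n _ => (hint (hKcont n)).const_mul _]
    simp only [intervalIntegral.integral_const_mul, hsign, sum_neg_distrib,
      intervalIntegral.integral_eq_sub_of_hasDerivAt (fun t ht => hderiv t (hIcc ▸ ht) _)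
        (hint (hKcont _))]
  rw [hTV, neg_sq, ← intervalIntegral.integral_const_mul (2 : ℝ)]
  refine intervalIntegral.sq_integral_le_mul_of_sq_le_mul hτ.le
    (hint (continuousOn_finsetSum _ fun n _ => continuousOn_const.mul (hKcont n)))
    (hint (continuousOn_const.mul (continuousOn_finsetSum _ fun q _ =>
      (hRcont _ _).continuousOn.mul (hpcont _))))
    (hint (continuousOn_finsetSum _ fun n _ => (hvcont n).continuousOn.mul (hKcont n)))
    (fun t ht => ?_)
    (fun t ht => sum_mul_Kop_self_nonneg (hR t ht) (hpeq t ht) (hdb t ht) (hp t ht) _)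
    (fun t ht => sq_sum_sign_mul_Kop_le (hR t ht) (hpeq t ht) (hdb t ht) (hp t ht) ?_ _)
  · exact mul_nonneg zero_le_two (sum_nonneg fun q hq =>
      mul_nonneg (hR t ht _ _ (mem_filter.1 hq).2.1.symm) (hp t ht _).le)
  · intro n; rw [hpar n]; split_ifs <;> simp

/-- Tighter classical speed limit: the squared total variation distance is bounded by twice
the time-integrated *partial* dynamical activity (restricted to pairs of opposite parity)
times the total entropy production `∫₀^τ ⟨v, K_p v⟩ dt`. -/
theorem total_variation_sq_le_two_mul_partial_activity_mul_entropy (N : ℕ) (hN : 1 ≤ N)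
    (τ : ℝ) (hτ : 0 < τ)
    (R : ℝ → Matrix (Fin N) (Fin N) ℝ) (hRcont : ∀ m n : Fin N, Continuous fun t => R t m n)
    (hR : ∀ t ∈ Set.Icc (0:ℝ) τ, ∀ m n : Fin N, m ≠ n → 0 ≤ R t m n)
    (peq : ℝ → Fin N → ℝ) (hpeqcont : ∀ n : Fin N, Continuous fun t => peq t n)
    (hpeq : ∀ t ∈ Set.Icc (0:ℝ) τ, ∀ n, 0 < peq t n)
    (hdb : ∀ t ∈ Set.Icc (0:ℝ) τ, ∀ n m : Fin N, R t n m * peq t m = R t m n * peq t n)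
    (p : ℝ → Fin N → ℝ) (hp : ∀ t ∈ Set.Icc (0:ℝ) τ, ∀ n, 0 < p t n)
    (v : ℝ → Fin N → ℝ) (hvcont : ∀ n : Fin N, Continuous fun t => v t n)
    (hderiv : ∀ t ∈ Set.Icc (0:ℝ) τ, ∀ n : Fin N,
      HasDerivAt (fun s => p s n) (Kop (R t) (peq t) (p t) (v t) n) t)
    (par : Fin N → ℤ)
    (hpar : ∀ n, par n = if p τ n ≤ p 0 n then 1 else -1) :
    (∑ n, |p τ n - p 0 n|)^2
      ≤ 2 * (∫ t in (0:ℝ)..τ, ∑ nm ∈ Finset.univ.filter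
              (fun nm : Fin N × Fin N => nm.1 ≠ nm.2 ∧ par nm.1 ≠ par nm.2),
              R t nm.2 nm.1 * p t nm.1)
          * (∫ t in (0:ℝ)..τ, ∑ n, v t n * Kop (R t) (peq t) (p t) (v t) n) :=
  total_variation_sq_le_two_mul_partial_activity_mul_entropy_general N τ hτ R hRcont hR peq hpeqcont
    hpeq hdb p hp v hvcont hderiv par hpar
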